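/- Let 0 < n' < 2 and suppose Ψ(ρ) ≤ Cρ^{1+1/n'} for small ρ ≥ 0. Then for every M > 0 the infimum h_M^r := inf H^r over the constraint set F_M^r is strictly negative. -/

import Mathlib

open MeasureTheory Real Set Filter

noncomputable section

abbrev E2 := EuclideanSpace ℝ (Fin 2)

/-- The gravitational potential energy of a flat density. -/
def Epot (ρ : E2 → ℝ) : ℝ :=
  -(1/2) * ∫ p : E2 × E2, ρ p.1 * ρ p.2 / ‖p.1 - p.2‖

/-- Membership in the reduced constraint set F_M^r (for a given Ψ). -/
def inFM (Ψ : ℝ → ℝ) (M : ℝ) (ρ : E2 → ℝ) : Prop :=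
  (∀ x, 0 ≤ ρ x) ∧ MemLp ρ (4/3) volume ∧ Integrable ρ ∧ (∫ x, ρ x) = M ∧
    Integrable (fun x => Ψ (ρ x))

/-- The reduced energy-Casimir functional. -/
def Hr (Ψ : ℝ → ℝ) (ρ : E2 → ℝ) : ℝ := (∫ x, Ψ (ρ x)) + Epot ρ


/-!
Spread the mass `M` uniformly over the disc of radius `R`; this is the paper's rescaling
`b² ρ(b x)` of the uniform density on the unit disc, with `b = 1 / R`. For large `R` the density
`M / (R² |B₁|)` is below `ρ₁`, so the Casimir term is at most `C M (M / |B₁|)^{1/n'} R^{-2/n'}`.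
Any two points of the disc are at distance less than `2R`, so `E_pot ≤ -M² / (4R)`.
Since `2 / n' > 1`, the potential term wins.
-/

open Metric Module Topology

section InverseNormKernel

variable {E : Type*} [NormedAddCommGroup E] [NormedSpace ℝ E] [FiniteDimensional ℝ E]
  [MeasurableSpace E] [BorelSpace E] (μ : Measure E) [μ.IsAddHaarMeasure]

theorem integrableOn_inv_norm_ball (hE : 2 ≤ finrank ℝ E) (r : ℝ) :
    IntegrableOn (fun x : E => ‖x‖⁻¹) (ball 0 r) μ := by
  have : Nontrivial E := Module.nontrivial_of_finrank_pos (R := ℝ) (by omega)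
  -- in polar coordinates the integrand becomes `y ^ (d - 1) * y⁻¹ = y ^ (d - 2)`
  rw [integrableOn_fun_norm_addHaar μ (f := fun y => y⁻¹)]
  refine ((continuous_pow (finrank ℝ E - 2)).integrableOn_Icc (a := 0) (b := r)).mono_set
    Ioo_subset_Icc_self |>.congr_fun (fun y hy => ?_) measurableSet_Ioo
  have hy : y ≠ 0 := hy.1.ne'
  rw [smul_eq_mul, show finrank ℝ E - 1 = finrank ℝ E - 2 + 1 by omega, pow_succ,
    mul_inv_cancel_right₀ hy]

theorem integrable_mul_mul_div_norm_sub (hE : 2 ≤ finrank ℝ E) {ρ : E → ℝ} {c R : ℝ}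
    (hρ : Integrable ρ μ) (hbdd : ∀ x, |ρ x| ≤ c) (hsupp : Function.support ρ ⊆ ball 0 R) :
    Integrable (fun p : E × E => ρ p.1 * ρ p.2 / ‖p.1 - p.2‖) (μ.prod μ) := by
  set g := (ball (0 : E) (2 * R)).indicator fun z => ‖z‖⁻¹
  have hg : Integrable g μ :=
    (integrable_indicator_iff measurableSet_ball).2 (integrableOn_inv_norm_ball μ hE _)
  have hc : 0 ≤ c := (abs_nonneg (ρ 0)).trans (hbdd 0)
  have hg0 : ∀ z, 0 ≤ g z := indicator_nonneg fun z _ => inv_nonneg.2 (norm_nonneg z)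
  -- the integrand is bounded by `c * (|ρ y| * g (x - y))`, a convolution integrand
  refine ((hρ.norm.convolution_integrand (ContinuousLinearMap.mul ℝ ℝ) hg).const_mul c).mono'
    ?_ (ae_of_all _ fun p => ?_)
  · exact (hρ.aestronglyMeasurable.comp_fst.mul hρ.aestronglyMeasurable.comp_snd).div₀
      (continuous_fst.sub continuous_snd).norm.aestronglyMeasurable
  obtain ⟨x, y⟩ := p
  simp only [ContinuousLinearMap.mul_apply', norm_div, norm_mul, Real.norm_eq_abs]
  by_cases hxy : ρ x = 0 ∨ ρ y = 0
  · rcases hxy with h | h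
    · simp only [h, abs_zero, zero_mul, zero_div]
      exact mul_nonneg hc (mul_nonneg (abs_nonneg _) (hg0 _))
    · simp only [h, abs_zero, zero_mul, mul_zero, zero_div, le_refl]
  push Not at hxy
  have hx : ‖x‖ < R := mem_ball_zero_iff.1 (hsupp hxy.1)
  have hy : ‖y‖ < R := mem_ball_zero_iff.1 (hsupp hxy.2)
  have hlt : ‖x - y‖ < 2 * R := (norm_sub_le x y).trans_lt (by linarith)
  rw [show g (x - y) = ‖x - y‖⁻¹ from indicator_of_mem (mem_ball_zero_iff.2 hlt) _,
    div_eq_mul_inv, abs_of_nonneg (norm_nonneg _), mul_assoc]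
  exact mul_le_mul_of_nonneg_right (hbdd x) (by positivity)

end InverseNormKernel

theorem ae_prod_fst_ne_snd {α : Type*} [MeasurableSpace α] [MeasurableEq α] (μ ν : Measure α)
    [SFinite ν] [NullSingletonClass ν] : ∀ᵐ p ∂μ.prod ν, p.1 ≠ p.2 :=
  (Measure.ae_prod_iff_ae_ae (measurableSet_eq_fun measurable_fst measurable_snd).compl).2
    (ae_of_all _ fun x => (Measure.ae_ne ν x).mono fun _ h => h.symm)

theorem Epot_le_of_support_subset_ball {ρ : E2 → ℝ} {c R : ℝ} (hR : 0 < R)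
    (hρ : Integrable ρ) (hnn : ∀ x, 0 ≤ ρ x) (hbdd : ∀ x, ρ x ≤ c)
    (hsupp : Function.support ρ ⊆ ball 0 R) :
    Epot ρ ≤ -((∫ x, ρ x) ^ 2 / (4 * R)) := by
  have hF := integrable_mul_mul_div_norm_sub volume (by simp) hρ
    (fun x => (abs_of_nonneg (hnn x)).trans_le (hbdd x)) hsupp
  have hG : Integrable (fun p : E2 × E2 => ρ p.1 * (ρ p.2 / (2 * R))) :=
    hρ.mul_prod (hρ.div_const _)
  have hGF : (fun p : E2 × E2 => ρ p.1 * (ρ p.2 / (2 * R))) ≤ᵐ[volume]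
      fun p => ρ p.1 * ρ p.2 / ‖p.1 - p.2‖ := by
    filter_upwards [ae_prod_fst_ne_snd volume volume] with ⟨x, y⟩ hxy
    rw [← mul_div_assoc]
    by_cases h0 : ρ x * ρ y = 0
    · simp [h0]
    obtain ⟨hx, hy⟩ := mul_ne_zero_iff.1 h0
    have hx : ‖x‖ < R := mem_ball_zero_iff.1 (hsupp hx)
    have hy : ‖y‖ < R := mem_ball_zero_iff.1 (hsupp hy)
    exact div_le_div_of_nonneg_left (mul_nonneg (hnn x) (hnn y)) (norm_pos_iff.2 (sub_ne_zero.2 hxy))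
      ((norm_sub_le x y).trans (by linarith))
  have hprod : ∫ p : E2 × E2, ρ p.1 * (ρ p.2 / (2 * R)) = (∫ x, ρ x) * ((∫ x, ρ x) / (2 * R)) := by
    rw [Measure.volume_eq_prod, integral_prod_mul ρ fun y => ρ y / (2 * R), integral_div]
  have hsq : (∫ x, ρ x) ^ 2 / (4 * R) = (∫ x, ρ x) * ((∫ x, ρ x) / (2 * R)) / 2 := by
    field_simp; ring
  rw [Epot, hsq]
  linarith [integral_mono_ae hG hF hGF]

theorem volume_real_ball_E2 {R : ℝ} (hR : 0 ≤ R) :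
    volume.real (ball (0 : E2) R) = R ^ 2 * volume.real (ball (0 : E2) 1) := by
  simp [measureReal_def, Measure.addHaar_ball volume (0 : E2) hR, ENNReal.toReal_ofReal,
    hR, ENNReal.toReal_mul]

theorem volume_real_ball_pos {R : ℝ} (hR : 0 < R) : 0 < volume.real (ball (0 : E2) R) :=
  ENNReal.toReal_pos (measure_ball_pos volume 0 hR).ne' measure_ball_lt_top.ne

theorem div_sq_mul_rpow {m v R : ℝ} (hm : 0 ≤ m) (hv : 0 ≤ v) (hR : 0 < R) (q : ℝ) :
    (m / (R ^ 2 * v)) ^ q = (m / v) ^ q * R ^ (-(2 * q)) := by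
  rw [mul_comm, ← div_div, div_rpow (div_nonneg hm hv) (by positivity), rpow_neg hR.le,
    ← rpow_natCast, ← rpow_mul hR.le, div_eq_mul_inv]
  norm_num

def uniformBallDensity (M R : ℝ) : E2 → ℝ :=
  (ball (0 : E2) R).indicator fun _ => M / volume.real (ball (0 : E2) R)

section UniformBallDensity

variable {M R : ℝ}

theorem uniformBallDensity_nonneg (hM : 0 ≤ M) (x : E2) : 0 ≤ uniformBallDensity M R x :=
  indicator_nonneg (fun _ _ => div_nonneg hM measureReal_nonneg) x

theorem uniformBallDensity_le (hM : 0 ≤ M) (x : E2) :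
    uniformBallDensity M R x ≤ M / volume.real (ball (0 : E2) R) :=
  indicator_le' (fun _ _ => le_rfl) (fun _ _ => div_nonneg hM measureReal_nonneg) x

theorem integrable_uniformBallDensity : Integrable (uniformBallDensity M R) :=
  (integrable_indicator_iff measurableSet_ball).2 (integrableOn_const measure_ball_lt_top.ne)

theorem integral_uniformBallDensity (hR : 0 < R) : ∫ x, uniformBallDensity M R x = M := by
  rw [uniformBallDensity, integral_indicator_const _ measurableSet_ball, smul_eq_mul,
    mul_div_cancel₀ _ (volume_real_ball_pos hR).ne']

theorem comp_uniformBallDensity {Ψ : ℝ → ℝ} (hΨ₀ : Ψ 0 = 0) :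
    (fun x => Ψ (uniformBallDensity M R x)) =
      (ball (0 : E2) R).indicator fun _ => Ψ (M / volume.real (ball (0 : E2) R)) :=
  (indicator_comp_of_zero hΨ₀).symm

theorem inFM_uniformBallDensity {Ψ : ℝ → ℝ} (hΨ₀ : Ψ 0 = 0) (hM : 0 ≤ M) (hR : 0 < R) :
    inFM Ψ M (uniformBallDensity M R) := by
  refine ⟨uniformBallDensity_nonneg hM,
    memLp_indicator_const _ measurableSet_ball _ (Or.inr measure_ball_lt_top.ne),
    integrable_uniformBallDensity, integral_uniformBallDensity hR, ?_⟩
  rw [comp_uniformBallDensity hΨ₀, integrable_indicator_iff measurableSet_ball]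
  exact integrableOn_const measure_ball_lt_top.ne

theorem Hr_uniformBallDensity_le {Ψ : ℝ → ℝ} (hΨ₀ : Ψ 0 = 0) (hM : 0 ≤ M) (hR : 0 < R) :
    Hr Ψ (uniformBallDensity M R) ≤
      volume.real (ball (0 : E2) R) * Ψ (M / volume.real (ball (0 : E2) R)) - M ^ 2 / (4 * R) := by
  have hEpot := Epot_le_of_support_subset_ball hR integrable_uniformBallDensity
    (uniformBallDensity_nonneg hM) (uniformBallDensity_le hM) support_indicator_subset
  rw [integral_uniformBallDensity hR] at hEpot
  rw [Hr, comp_uniformBallDensity hΨ₀, integral_indicator_const _ measurableSet_ball, smul_eq_mul]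
  linarith

theorem Hr_uniformBallDensity_le_rpow {Ψ : ℝ → ℝ} {C q ρ₁ : ℝ} (hΨ₀ : Ψ 0 = 0)
    (hsmall : ∀ s, 0 ≤ s → s ≤ ρ₁ → Ψ s ≤ C * s ^ (1 + q)) (hM : 0 < M) (hR : 0 < R)
    (hdilute : M / (R ^ 2 * volume.real (ball (0 : E2) 1)) ≤ ρ₁) :
    Hr Ψ (uniformBallDensity M R) ≤
      C * M * (M / volume.real (ball (0 : E2) 1)) ^ q * R ^ (-(2 * q)) - M ^ 2 / (4 * R) := by
  have hV := volume_real_ball_E2 hR.le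
  have hv : 0 < volume.real (ball (0 : E2) 1) := volume_real_ball_pos one_pos
  have hc : 0 < M / volume.real (ball (0 : E2) R) := div_pos hM (volume_real_ball_pos hR)
  grw [Hr_uniformBallDensity_le hΨ₀ hM.le hR, hsmall _ hc.le (hV ▸ hdilute), rpow_add hc,
    rpow_one, hV, div_sq_mul_rpow hM.le hv.le hR]
  field_simp
  rfl

end UniformBallDensity

theorem eventually_mul_rpow_neg_lt_div (a : ℝ) {b p : ℝ} (hb : 0 < b) (hp : 1 < p) :
    ∀ᶠ R in atTop, a * R ^ (-p) < b / R := by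
  have hdecay : Tendsto (fun R : ℝ => a * R ^ (-(p - 1))) atTop (𝓝 0) := by
    simpa using (tendsto_rpow_neg_atTop (sub_pos.2 hp)).const_mul a
  filter_upwards [hdecay.eventually (eventually_lt_nhds hb), eventually_gt_atTop 0] with R hR hR0
  rwa [lt_div_iff₀ hR0, mul_assoc, ← rpow_add_one hR0.ne', neg_add_eq_sub, ← neg_sub]

theorem stmt13_general (n' C ρ₁ : ℝ) (hn'1 : 0 < n') (hn'2 : n' < 2)
    (hρ₁ : 0 < ρ₁) (Ψ : ℝ → ℝ) (hΨ0 : ∀ s : ℝ, 0 ≤ s → 0 ≤ Ψ s)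
    (hsmall : ∀ s : ℝ, 0 ≤ s → s ≤ ρ₁ → Ψ s ≤ C * s ^ (1 + 1/n'))
    (M : ℝ) (hM : 0 < M) :
    sInf {y : EReal | ∃ ρ : E2 → ℝ, inFM Ψ M ρ ∧ y = (Hr Ψ ρ : EReal)} < 0 := by
  have hΨ₀ : Ψ 0 = 0 := by
    have h := hsmall 0 le_rfl hρ₁.le
    rw [zero_rpow (by positivity), mul_zero] at h
    exact le_antisymm h (hΨ0 0 le_rfl)
  set v := volume.real (ball (0 : E2) 1)
  have hv : 0 < v := volume_real_ball_pos one_pos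
  have hdilute : ∀ᶠ R in atTop, M / (R ^ 2 * v) ≤ ρ₁ :=
    (tendsto_const_nhds.div_atTop ((tendsto_pow_atTop two_ne_zero).atTop_mul_const hv)).eventually
      (eventually_le_nhds hρ₁)
  have hp : 1 < 2 * (1 / n') := by rw [mul_one_div]; exact (one_lt_div hn'1).2 hn'2
  obtain ⟨R, hR, hRρ₁, hRdecay⟩ := ((eventually_gt_atTop 0).and (hdilute.and
    (eventually_mul_rpow_neg_lt_div (C * M * (M / v) ^ (1 / n')) (by positivity : 0 < M ^ 2 / 4)
      hp))).exists
  have hneg : Hr Ψ (uniformBallDensity M R) < 0 := by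
    grw [Hr_uniformBallDensity_le_rpow hΨ₀ hsmall hM hR hRρ₁, sub_neg, ← div_div]
    exact hRdecay
  refine (sInf_le ?_).trans_lt (EReal.coe_lt_coe_iff.2 hneg)
  exact ⟨_, inFM_uniformBallDensity hΨ₀ hM.le hR, rfl⟩

theorem stmt13 (n' C ρ₁ : ℝ) (hn'1 : 0 < n') (hn'2 : n' < 2) (hC : 0 < C)
    (hρ₁ : 0 < ρ₁) (Ψ : ℝ → ℝ) (hΨ0 : ∀ s : ℝ, 0 ≤ s → 0 ≤ Ψ s)
    (hsmall : ∀ s : ℝ, 0 ≤ s → s ≤ ρ₁ → Ψ s ≤ C * s ^ (1 + 1/n'))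
    (M : ℝ) (hM : 0 < M) :
    sInf {y : EReal | ∃ ρ : E2 → ℝ, inFM Ψ M ρ ∧ y = (Hr Ψ ρ : EReal)} < 0 :=
  stmt13_general n' C ρ₁ hn'1 hn'2 hρ₁ Ψ hΨ0 hsmall M hM
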